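/- arXiv:0901.3273 — 3 statements merged into one kernel-verified Lean document; each statement's English description precedes it below -/
import Mathlib

section
/- The first loop equation holds: W₂(x,x) + W₁(x)² = -P₁(x), where W₁(x) = -Tr(D(x)M(x)), W₂(x,x) = -(1/2)Tr(M'(x)²), and P₁(x) = det D(x). -/
/-!
For a traceless `2 × 2` matrix `D`, Cayley–Hamilton gives `D² = -(det D) • 1`, and the
determinant condition `det Ψ = 1` says exactly that `ψᵀ A φ = 1`, i.e. that `M = φ (ψᵀ A)`
is a rank-one idempotent of trace one. Expanding `Tr([D, M]²) = 2 Tr(DMDM) - 2 Tr(D² M²)` by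
cyclicity, the first term is `Tr(DM)²` because `DM` has rank one, and the second is
`-det D · Tr M = -det D`.
-/

open Matrix

namespace Matrix

variable {R n : Type*} [CommRing R] [Fintype n]

theorem trace_commutator_mul_self (A B : Matrix n n R) :
    trace ((A * B - B * A) * (A * B - B * A)) =
      2 * (trace (A * B * (A * B)) - trace (A * A * (B * B))) := by
  have hABBA : trace (A * B * (B * A)) = trace (A * A * (B * B)) := by
    rw [← Matrix.mul_assoc, trace_mul_comm]; simp only [Matrix.mul_assoc]
  have hBAAB : trace (B * A * (A * B)) = trace (A * A * (B * B)) := by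
    rw [Matrix.mul_assoc, trace_mul_comm]; simp only [Matrix.mul_assoc]
  have hBABA : trace (B * A * (B * A)) = trace (A * B * (A * B)) := by
    rw [Matrix.mul_assoc, trace_mul_comm]; simp only [Matrix.mul_assoc]
  simp only [sub_mul, mul_sub, trace_sub, hABBA, hBAAB, hBABA]
  ring

theorem trace_vecMulVec_mul_self (u v : n → R) :
    trace (vecMulVec u v * vecMulVec u v) = trace (vecMulVec u v) ^ 2 := by
  rw [vecMulVec_mul_vecMulVec, trace_vecMulVec, trace_vecMulVec, dotProduct_smul, smul_eq_mul,
    dotProduct_comm v u, sq]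

theorem vecMulVec_mul_self_of_dotProduct_eq_one {u v : n → R} (h : v ⬝ᵥ u = 1) :
    vecMulVec u v * vecMulVec u v = vecMulVec u v := by
  rw [vecMulVec_mul_vecMulVec, h, one_smul]

theorem mul_self_eq_neg_det_smul_one_of_trace_eq_zero {D : Matrix (Fin 2) (Fin 2) R}
    (hD : trace D = 0) : D * D = -D.det • 1 := by
  rw [trace_fin_two] at hD
  ext i j
  fin_cases i <;> fin_cases j <;>
    simp only [Fin.zero_eta, Fin.mk_one, Fin.isValue, mul_apply, Fin.sum_univ_two, det_fin_two,
      neg_sub, smul_apply, one_apply_eq, one_apply_ne, ne_eq, zero_ne_one, one_ne_zero,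
      not_false_eq_true, smul_eq_mul, mul_one, mul_zero]
  · linear_combination D 0 0 * hD
  · linear_combination D 0 1 * hD
  · linear_combination D 1 0 * hD
  · linear_combination D 1 1 * hD

theorem trace_commutator_vecMulVec_mul_self {D : Matrix (Fin 2) (Fin 2) R} (hD : trace D = 0)
    {u v : Fin 2 → R} (huv : v ⬝ᵥ u = 1) :
    trace ((D * vecMulVec u v - vecMulVec u v * D) * (D * vecMulVec u v - vecMulVec u v * D)) =
      2 * (trace (D * vecMulVec u v) ^ 2 + D.det) := by
  have hDMDM : trace (D * vecMulVec u v * (D * vecMulVec u v)) = trace (D * vecMulVec u v) ^ 2 := by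
    rw [mul_vecMulVec, trace_vecMulVec_mul_self]
  have hDDMM : trace (D * D * (vecMulVec u v * vecMulVec u v)) = -D.det := by
    rw [vecMulVec_mul_self_of_dotProduct_eq_one huv,
      mul_self_eq_neg_det_smul_one_of_trace_eq_zero hD, smul_mul,
      Matrix.one_mul, trace_smul, trace_vecMulVec, dotProduct_comm, huv, smul_eq_mul, mul_one]
  rw [trace_commutator_mul_self, hDMDM, hDDMM]
  ring

theorem dotProduct_vecMul_col_zero_col_one (P : Matrix (Fin 2) (Fin 2) R) :
    (Pᵀ 0 ᵥ* !![0, 1; -1, 0]) ⬝ᵥ Pᵀ 1 = P.det := by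
  simp only [dotProduct, vecMul, Fin.isValue, transpose_apply, of_apply, cons_val',
    cons_val_fin_one, Fin.sum_univ_two, cons_val_zero, cons_val_one, det_fin_two]
  ring

end Matrix

theorem first_loop_equation_general
    (Ψ D : ℝ → Matrix (Fin 2) (Fin 2) ℝ)
    (htr : ∀ x, Matrix.trace (D x) = 0)
    (hdet : ∀ x, (Ψ x).det = 1)
    (ψ φ : ℝ → Fin 2 → ℝ)
    (hψ : ∀ x i, ψ x i = Ψ x i 0)
    (hφ : ∀ x i, φ x i = Ψ x i 1)
    (M : ℝ → Matrix (Fin 2) (Fin 2) ℝ)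
    (hM : ∀ x, M x = Matrix.vecMulVec (φ x) (Matrix.vecMul (ψ x) !![(0 : ℝ), 1; -1, 0]))
    (M' : ℝ → Matrix (Fin 2) (Fin 2) ℝ)
    (hM' : ∀ x, M' x = D x * M x - M x * D x)
    (x : ℝ) :
    -(1 / 2) * Matrix.trace (M' x * M' x) + (Matrix.trace (D x * M x)) ^ 2 =
      -(D x).det := by
  have hψx : ψ x = (Ψ x)ᵀ 0 := funext (hψ x)
  have hφx : φ x = (Ψ x)ᵀ 1 := funext (hφ x)
  have hnormalized : ψ x ᵥ* !![(0 : ℝ), 1; -1, 0] ⬝ᵥ φ x = 1 := by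
    rw [hψx, hφx, dotProduct_vecMul_col_zero_col_one, hdet x]
  have hcommutator := trace_commutator_vecMulVec_mul_self (htr x) hnormalized
  rw [hM' x, hM x]
  linarith

/-- First loop equation: `W₂(x,x) + W₁(x)² = -P₁(x)` with
`W₁ = -Tr(DM)`, `W₂(x,x) = -(1/2) Tr(M'²)` where `M' = [D,M]`, and `P₁ = det D`. -/
theorem first_loop_equation
    (Ψ D : ℝ → Matrix (Fin 2) (Fin 2) ℝ)
    (hΨ : ∀ x i j, HasDerivAt (fun t => Ψ t i j) ((D x * Ψ x) i j) x)
    (htr : ∀ x, Matrix.trace (D x) = 0)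
    (hdet : ∀ x, (Ψ x).det = 1)
    (ψ φ : ℝ → Fin 2 → ℝ)
    (hψ : ∀ x i, ψ x i = Ψ x i 0)
    (hφ : ∀ x i, φ x i = Ψ x i 1)
    (M : ℝ → Matrix (Fin 2) (Fin 2) ℝ)
    (hM : ∀ x, M x = Matrix.vecMulVec (φ x) (Matrix.vecMul (ψ x) !![(0 : ℝ), 1; -1, 0]))
    (M' : ℝ → Matrix (Fin 2) (Fin 2) ℝ)
    (hM' : ∀ x, M' x = D x * M x - M x * D x)
    (x : ℝ) :
    -(1 / 2) * Matrix.trace (M' x * M' x) + (Matrix.trace (D x * M x)) ^ 2 =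
      -(D x).det :=
  first_loop_equation_general Ψ D htr hdet ψ φ hψ hφ M hM M' hM' x
end

section
/- For any 2×2 matrices D (traceless) and M with M² = M and Tr M = 1: Tr(D M)² = Tr(D M D M), and -(1/2)Tr([D,M]²) + Tr(DMDM) = Tr(D² M). -/
/-!
For a `2 × 2` matrix, Cayley–Hamilton reads `A * A = tr A • A - det A • 1`. For an idempotent `M`
of trace one it collapses to `det M • 1 = 0`, so `det (D * M) = 0`, and taking traces gives
`tr (A * A) = (tr A) ^ 2 - 2 det A` with `A = D * M`. The commutator identity follows, in any dimension,
from `M * M = M` and cyclicity of the trace.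
-/

open Matrix

namespace Matrix

variable {R : Type*} [CommRing R]

theorem mul_self_fin_two (A : Matrix (Fin 2) (Fin 2) R) :
    A * A = A.trace • A - A.det • 1 := by
  ext i j
  fin_cases i <;> fin_cases j <;>
    simp [trace_fin_two, det_fin_two, mul_apply, Fin.sum_univ_two] <;> ring

theorem trace_mul_self_fin_two (A : Matrix (Fin 2) (Fin 2) R) :
    trace (A * A) = trace A ^ 2 - 2 * det A := by
  rw [mul_self_fin_two, trace_sub, trace_smul, trace_smul, trace_one, Fintype.card_fin]
  simp only [smul_eq_mul]
  ring

theorem det_eq_zero_of_isIdempotentElem_of_trace_eq_one {M : Matrix (Fin 2) (Fin 2) R}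
    (hM : IsIdempotentElem M) (htr : trace M = 1) : det M = 0 := by
  have h : det M • (1 : Matrix (Fin 2) (Fin 2) R) = 0 := by
    have := mul_self_fin_two M
    rw [hM.eq, htr, one_smul] at this
    exact sub_eq_self.mp this.symm
  simpa using congrFun (congrFun h 0) 0

theorem trace_sq_eq_trace_mul_self_of_isIdempotentElem {D M : Matrix (Fin 2) (Fin 2) R}
    (hM : IsIdempotentElem M) (htr : trace M = 1) :
    trace (D * M) ^ 2 = trace (D * M * D * M) := by
  rw [mul_assoc (D * M) D M, trace_mul_self_fin_two, det_mul,
    det_eq_zero_of_isIdempotentElem_of_trace_eq_one hM htr]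
  ring

variable {n : Type*} [Fintype n]

theorem trace_commutator_mul_self_of_isIdempotentElem {D M : Matrix n n R}
    (hM : IsIdempotentElem M) :
    trace ((D * M - M * D) * (D * M - M * D)) =
      2 * trace (D * M * D * M) - 2 * trace (D * D * M) := by
  have hDMMD : trace (D * M * M * D) = trace (D * D * M) := by
    rw [mul_assoc D, hM.eq, trace_mul_cycle]
  have hMDDM : trace (M * D * D * M) = trace (D * D * M) := by
    rw [trace_mul_comm, ← mul_assoc, ← mul_assoc, hM.eq, mul_assoc, trace_mul_comm]
  have hMDMD : trace (M * D * M * D) = trace (D * M * D * M) := by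
    rw [trace_mul_comm, ← mul_assoc, ← mul_assoc]
  simp only [sub_mul, mul_sub, ← mul_assoc, trace_sub, hDMMD, hMDDM, hMDMD]
  ring

end Matrix

theorem loop_equation_algebraic_core_general {R : Type*} [CommRing R] [Invertible (2 : R)]
    (D M : Matrix (Fin 2) (Fin 2) R)
    (hM : M * M = M) (htrM : Matrix.trace M = 1) :
    (Matrix.trace (D * M)) ^ 2 = Matrix.trace (D * M * D * M) ∧
    -(⅟(2 : R) * Matrix.trace ((D * M - M * D) * (D * M - M * D))) +
        Matrix.trace (D * M * D * M) =
      Matrix.trace (D * D * M) := by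
  refine ⟨trace_sq_eq_trace_mul_self_of_isIdempotentElem hM htrM, ?_⟩
  rw [trace_commutator_mul_self_of_isIdempotentElem hM]
  linear_combination (trace (D * D * M) - trace (D * M * D * M)) * invOf_mul_self (2 : R)

/-- Algebraic core of the `n = 0` loop equation: for 2×2 matrices with `Tr D = 0`,
`M² = M`, `Tr M = 1`: `(Tr DM)² = Tr(DMDM)` and `-(1/2)Tr([D,M]²) + Tr(DMDM) = Tr(D²M)`. -/
theorem loop_equation_algebraic_core {R : Type*} [CommRing R] [Invertible (2 : R)]
    (D M : Matrix (Fin 2) (Fin 2) R)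
    (hD : Matrix.trace D = 0) (hM : M * M = M) (htrM : Matrix.trace M = 1) :
    (Matrix.trace (D * M)) ^ 2 = Matrix.trace (D * M * D * M) ∧
    -(⅟(2 : R) * Matrix.trace ((D * M - M * D) * (D * M - M * D))) +
        Matrix.trace (D * M * D * M) =
      Matrix.trace (D * D * M) :=
  loop_equation_algebraic_core_general D M hM htrM
end

section
/- The coincident non-connected 2-point function is rational: W₂(x,x) + W₁(x)² = b(x)c(x) - a(x)d(x), where D = [[a,b],[c,d]]. -/
/-!
Write `[p, q] = p₁ q₂ - p₂ q₁` and `u = (ψ, ψ̃)`, `v = (φ, φ̃)`, so that `K(x, t) = [u(x), v(t)] / (x - t)`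
and `[u, v] = 1`. The Plücker relation turns the numerator of `-K(x,t) K(t,x) - 1/(x-t)²` into
`[u(x), u(t)] [v(t), v(x)]`, a product of two functions of `t` vanishing at `t = x`; so the limit is
the product of their derivatives, `[u, D u] [D v, v]`, which for traceless `D` equals
`-det D [u, v]² - [D u, v]²`.
-/

open Filter Topology

theorem tendsto_mul_div_sq_of_hasDerivAt {f g : ℝ → ℝ} {f' g' x : ℝ}
    (hf : HasDerivAt f f' x) (hg : HasDerivAt g g' x) (hf₀ : f x = 0) (hg₀ : g x = 0) :
    Tendsto (fun t => f t * g t / (t - x) ^ 2) (𝓝[≠] x) (𝓝 (f' * g')) := by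
  refine ((hasDerivAt_iff_tendsto_slope.mp hf).mul (hasDerivAt_iff_tendsto_slope.mp hg)).congr'
    (eventually_nhdsWithin_of_forall fun t ht => ?_)
  have ht : t - x ≠ 0 := sub_ne_zero.mpr ht
  simp only [slope_def_field, hf₀, hg₀, sub_zero]
  field_simp

theorem plucker_of_wronskian_eq_one {α R : Type*} [CommRing R] {ψ ψt φ φt : α → R}
    (hdet : ∀ x, ψ x * φt x - ψt x * φ x = 1) (x t : α) :
    (ψ x * φt t - ψt x * φ t) * (ψ t * φt x - ψt t * φ x) - 1 =
      (ψ x * ψt t - ψt x * ψ t) * (φt x * φ t - φ x * φt t) := by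
  linear_combination (ψ x * φt x - ψt x * φ x) * hdet t + hdet x

theorem mul_eq_neg_det_sub_sq_of_trace_eq_zero {R : Type*} [CommRing R] {a b c d ψ ψt φ φt : R}
    (htr : a + d = 0) (hdet : ψ * φt - ψt * φ = 1) :
    (ψ * (c * ψ + d * ψt) - ψt * (a * ψ + b * ψt)) * (φt * (a * φ + b * φt) - φ * (c * φ + d * φt))
      = b * c - a * d - ((a * ψ + b * ψt) * φt - (c * ψ + d * ψt) * φ) ^ 2 := by
  obtain rfl : d = -a := by linear_combination htr
  linear_combination (a ^ 2 + b * c) * (1 + ψ * φt - ψt * φ) * hdet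

/-- `W₂(x,x) + W₁(x)² = b(x)c(x) - a(x)d(x)`, where `W₂(x,x)` is the coincident limit
of `-K(x,x')K(x',x) - 1/(x-x')²`. -/
theorem W2_coincident_rational
    (a b c d ψ ψt φ φt : ℝ → ℝ)
    (htr : ∀ x, a x + d x = 0)
    (hψ : ∀ x, HasDerivAt ψ (a x * ψ x + b x * ψt x) x)
    (hψt : ∀ x, HasDerivAt ψt (c x * ψ x + d x * ψt x) x)
    (hφ : ∀ x, HasDerivAt φ (a x * φ x + b x * φt x) x)
    (hφt : ∀ x, HasDerivAt φt (c x * φ x + d x * φt x) x)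
    (hdet : ∀ x, ψ x * φt x - ψt x * φ x = 1)
    (K : ℝ → ℝ → ℝ)
    (hK : ∀ x₁ x₂, K x₁ x₂ = (ψ x₁ * φt x₂ - ψt x₁ * φ x₂) / (x₁ - x₂))
    (W₁ : ℝ → ℝ)
    (hW₁ : ∀ x, W₁ x = deriv ψ x * φt x - deriv ψt x * φ x)
    (x : ℝ) :
    Filter.Tendsto (fun x' => -K x x' * K x' x - 1 / (x - x') ^ 2)
      (nhdsWithin x {x}ᶜ)
      (nhds (b x * c x - a x * d x - W₁ x ^ 2)) := by
  have hu : HasDerivAt (fun t => ψ x * ψt t - ψt x * ψ t)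
      (ψ x * (c x * ψ x + d x * ψt x) - ψt x * (a x * ψ x + b x * ψt x)) x :=
    ((hψt x).const_mul (ψ x)).sub ((hψ x).const_mul (ψt x))
  have hv : HasDerivAt (fun t => φt x * φ t - φ x * φt t)
      (φt x * (a x * φ x + b x * φt x) - φ x * (c x * φ x + d x * φt x)) x :=
    ((hφ x).const_mul (φt x)).sub ((hφt x).const_mul (φ x))
  have hlim := tendsto_mul_div_sq_of_hasDerivAt hu hv (by ring) (by ring)
  rw [hW₁, (hψ x).deriv, (hψt x).deriv, ← mul_eq_neg_det_sub_sq_of_trace_eq_zero (htr x) (hdet x)]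
  refine hlim.congr' (eventually_nhdsWithin_of_forall fun t ht => ?_)
  have htx : t - x ≠ 0 := sub_ne_zero.mpr ht
  have hxt : x - t ≠ 0 := sub_ne_zero.mpr (Ne.symm ht)
  rw [← plucker_of_wronskian_eq_one hdet x t]
  simp only [hK]
  field_simp
  ring
end
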